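/- arXiv:1805.10526 — 2 statements merged into one kernel-verified Lean document; each statement's English description precedes it below -/
import Mathlib

section
/- Let l ∈ ℝ and let q : (0,∞) → ℝ. Let B be twice continuously differentiable on {(x,y) : 0 < y < x} and define u on {(z,s) : 0 < s < z} by u(z,s) := (z−s)^{l} B(√z + √s, √z − √s); equivalently, u(z,s) = (xy)^{l} B(x,y) with z = (x+y)²/4, s = (x−y)²/4. Then u is twice continuously differentiable, and B satisfies ∂²B/∂x²(x,y) − ∂²B/∂y²(x,y) + (l(l+1)/y² − l(l+1)/x² − q(x)) B(x,y) = 0 for all 0 < y < x if and only if u satisfies ∂²u/∂z∂s (z,s) + (l/(z−s)) ∂u/∂z (z,s) − (l/(z−s)) ∂u/∂s (z,s) = (1/(4√(zs))) q(√z + √s) u(z,s) for all 0 < s < z. -/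
/-!
Write `x = √z + √s`, `y = √z - √s`. Then `∂_z = (∂_x + ∂_y) / (2√z)` and
`∂_s = (∂_x - ∂_y) / (2√s)`, so by symmetry of the Hessian `∂_z ∂_s = (∂_x² - ∂_y²) / (4√(zs))`.
The weight `(z - s)^l = (xy)^l` removes the first-order terms: on `(z - s)^l β` the operator
`∂_z ∂_s + l/(z - s) (∂_z - ∂_s)` acts as `(z - s)^l (∂_z ∂_s + l(l + 1)/(z - s)²)` on `β`,
and `l(l + 1)/(z - s)² = (l(l + 1)/y² - l(l + 1)/x²) / (4√(zs))`. Hence the residual of the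
canonical equation at `(z, s)` is the residual of the Bessel–Goursat equation at `(x, y)` times
the positive factor `(z - s)^l / (4√(zs))`, and `(z, s) ↦ (x, y)` maps `{0 < s < z}` onto
`{0 < y < x}`.
-/

open Set Filter Topology

section SecondDerivative

variable {X E G : Type*} [TopologicalSpace X] [NormedAddCommGroup E] [NormedSpace ℝ E]
  [NormedAddCommGroup G] [NormedSpace ℝ G] {F : E → G}

theorem ContDiffAt.eventually_differentiableAt_comp {γ : X → E} {t : X}
    (hF : ContDiffAt ℝ 2 F (γ t)) (hγ : ContinuousAt γ t) :
    ∀ᶠ t' in 𝓝 t, DifferentiableAt ℝ F (γ t') :=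
  hγ.eventually ((hF.eventually (by simp)).mono fun _ h => h.differentiableAt two_ne_zero)

theorem ContDiffAt.hasDerivAt_fderiv_apply_comp {γ : ℝ → E} {v w : E} {t : ℝ}
    (hF : ContDiffAt ℝ 2 F (γ t)) (hγ : HasDerivAt γ v t) :
    HasDerivAt (fun t' => fderiv ℝ F (γ t') w) (fderiv ℝ (fderiv ℝ F) (γ t) v w) t := by
  have hF' : DifferentiableAt ℝ (fderiv ℝ F) (γ t) :=
    (hF.fderiv_right (m := 1) (by norm_num)).differentiableAt one_ne_zero
  simpa using (hF'.hasFDerivAt.comp_hasDerivAt t hγ).clm_apply (hasDerivAt_const t w)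

theorem ContDiffAt.deriv_deriv_comp {γ : ℝ → E} {v : E} {t : ℝ}
    (hF : ContDiffAt ℝ 2 F (γ t)) (hγ : ∀ t', HasDerivAt γ v t') :
    deriv (deriv (F ∘ γ)) t = fderiv ℝ (fderiv ℝ F) (γ t) v v := by
  have hderiv : deriv (F ∘ γ) =ᶠ[𝓝 t] fun t' => fderiv ℝ F (γ t') v := by
    filter_upwards [hF.eventually_differentiableAt_comp (hγ t).continuousAt] with t' ht'
    exact (ht'.hasFDerivAt.comp_hasDerivAt t' (hγ t')).deriv
  rw [hderiv.deriv_eq]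
  exact (hF.hasDerivAt_fderiv_apply_comp (hγ t)).deriv

end SecondDerivative

theorem ContinuousLinearMap.apply_diag_apply_antidiag_of_symm
    (b : ℝ × ℝ →L[ℝ] ℝ × ℝ →L[ℝ] ℝ) (hb : b (1, 0) (0, 1) = b (0, 1) (1, 0)) (a c : ℝ) :
    b (a, a) (c, -c) = a * c * (b (1, 0) (1, 0) - b (0, 1) (0, 1)) := by
  have hdiag : ((a, a) : ℝ × ℝ) = a • ((1, 0) + (0, 1)) := by simp
  have hanti : ((c, -c) : ℝ × ℝ) = c • ((1, 0) - (0, 1)) := by simp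
  simp only [hdiag, hanti, map_smul, map_add, map_sub, FunLike.coe_smul, FunLike.coe_add,
    Pi.smul_apply, Pi.add_apply, smul_eq_mul, hb]
  ring

theorem hasDerivAt_sub_const_rpow {l s z : ℝ} (hsz : s < z) :
    HasDerivAt (fun z' => (z' - s) ^ l) (l * (z - s) ^ (l - 1)) z := by
  simpa using ((hasDerivAt_id z).sub_const s).rpow_const (p := l) (Or.inl (sub_ne_zero.2 hsz.ne'))

theorem hasDerivAt_const_sub_rpow {l s z : ℝ} (hsz : s < z) :
    HasDerivAt (fun s' => (z - s') ^ l) (-(l * (z - s) ^ (l - 1))) s := by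
  simpa using ((hasDerivAt_id s).const_sub z).rpow_const (p := l) (Or.inl (sub_ne_zero.2 hsz.ne'))

theorem deriv_deriv_sub_rpow_mul {β : ℝ → ℝ → ℝ} {βs : ℝ → ℝ} {βz βzs l z s : ℝ} (hsz : s < z)
    (hβs : ∀ᶠ z' in 𝓝 z, HasDerivAt (β z') (βs z') s)
    (hβz : HasDerivAt (fun z' => β z' s) βz z) (hβzs : HasDerivAt βs βzs z) :
    deriv (fun z' => deriv (fun s' => (z' - s') ^ l * β z' s') s) z
      + l / (z - s) * deriv (fun z' => (z' - s) ^ l * β z' s) z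
      - l / (z - s) * deriv (fun s' => (z - s') ^ l * β z s') s
    = (z - s) ^ l * (βzs + l * (l + 1) / (z - s) ^ 2 * β z s) := by
  have hus : (fun z' => deriv (fun s' => (z' - s') ^ l * β z' s') s)
      =ᶠ[𝓝 z] fun z' => -(l * (z' - s) ^ (l - 1)) * β z' s + (z' - s) ^ l * βs z' := by
    filter_upwards [hβs, eventually_gt_nhds hsz] with z' hz' hsz'
    exact ((hasDerivAt_const_sub_rpow hsz').mul hz').deriv
  have hpow' : HasDerivAt (fun z' => -(l * (z' - s) ^ (l - 1)))
      (-(l * ((l - 1) * (z - s) ^ (l - 1 - 1)))) z :=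
    ((hasDerivAt_sub_const_rpow hsz).const_mul l).neg
  rw [hus.deriv_eq,
    ((hpow'.fun_mul hβz).fun_add ((hasDerivAt_sub_const_rpow hsz).fun_mul hβzs)).deriv,
    ((hasDerivAt_sub_const_rpow hsz).fun_mul hβz).deriv,
    ((hasDerivAt_const_sub_rpow hsz).fun_mul hβs.self_of_nhds).deriv]
  have hd : 0 < z - s := sub_pos.2 hsz
  rw [sub_sub, one_add_one_eq_two, Real.rpow_sub hd, Real.rpow_sub hd, Real.rpow_one, Real.rpow_two]
  field_simp
  ring

def goursatDomain : Set (ℝ × ℝ) := {p | 0 < p.2 ∧ p.2 < p.1}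

theorem isOpen_goursatDomain : IsOpen goursatDomain :=
  (isOpen_lt continuous_const continuous_snd).inter (isOpen_lt continuous_snd continuous_fst)

noncomputable def sqrtCoords (p : ℝ × ℝ) : ℝ × ℝ := (√p.1 + √p.2, √p.1 - √p.2)

theorem sqrtCoords_mem_goursatDomain {p : ℝ × ℝ} (hp : p ∈ goursatDomain) :
    sqrtCoords p ∈ goursatDomain := by
  have hs : 0 < √p.2 := Real.sqrt_pos.2 hp.1
  have hsz : √p.2 < √p.1 := Real.sqrt_lt_sqrt hp.1.le hp.2
  constructor <;> simp only [sqrtCoords] <;> linarith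

theorem sqrtCoords_surjOn : SurjOn sqrtCoords goursatDomain goursatDomain := by
  rintro ⟨x, y⟩ ⟨hy, hyx⟩
  refine ⟨(((x + y) / 2) ^ 2, ((x - y) / 2) ^ 2),
    ⟨by simp only; nlinarith, by simp only; nlinarith⟩, ?_⟩
  simp only [sqrtCoords, Real.sqrt_sq (by linarith : 0 ≤ (x + y) / 2),
    Real.sqrt_sq (by linarith : 0 ≤ (x - y) / 2)]
  ext <;> ring

theorem contDiffAt_sqrtCoords {n : WithTop ℕ∞} {p : ℝ × ℝ} (h₁ : p.1 ≠ 0) (h₂ : p.2 ≠ 0) :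
    ContDiffAt ℝ n sqrtCoords p := by
  have hz : ContDiffAt ℝ n (fun p : ℝ × ℝ => √p.1) p := contDiffAt_fst.sqrt h₁
  have hs : ContDiffAt ℝ n (fun p : ℝ × ℝ => √p.2) p := contDiffAt_snd.sqrt h₂
  exact (hz.add hs).prodMk (hz.sub hs)

theorem hasDerivAt_sqrtCoords_fst {z s : ℝ} (hz : z ≠ 0) :
    HasDerivAt (fun z' => sqrtCoords (z', s)) (1 / (2 * √z), 1 / (2 * √z)) z :=
  ((Real.hasDerivAt_sqrt hz).add_const √s).prodMk ((Real.hasDerivAt_sqrt hz).sub_const √s)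

theorem hasDerivAt_sqrtCoords_snd {z s : ℝ} (hs : s ≠ 0) :
    HasDerivAt (fun s' => sqrtCoords (z, s')) (1 / (2 * √s), -(1 / (2 * √s))) s :=
  ((Real.hasDerivAt_sqrt hs).const_add √z).prodMk ((Real.hasDerivAt_sqrt hs).const_sub √z)

theorem deriv_deriv_sub_rpow_mul_comp_sqrtCoords {F : ℝ × ℝ → ℝ} {l z s : ℝ} (hs : 0 < s)
    (hsz : s < z) (hF : ContDiffAt ℝ 2 F (sqrtCoords (z, s))) :
    deriv (fun z' => deriv (fun s' => (z' - s') ^ l * F (sqrtCoords (z', s'))) s) z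
      + l / (z - s) * deriv (fun z' => (z' - s) ^ l * F (sqrtCoords (z', s))) z
      - l / (z - s) * deriv (fun s' => (z - s') ^ l * F (sqrtCoords (z, s'))) s
    = (z - s) ^ l *
      ((fderiv ℝ (fderiv ℝ F) (sqrtCoords (z, s)) (1, 0) (1, 0)
          - fderiv ℝ (fderiv ℝ F) (sqrtCoords (z, s)) (0, 1) (0, 1)) / (4 * √z * √s)
        + l * (l + 1) / (z - s) ^ 2 * F (sqrtCoords (z, s))) := by
  have hz : 0 < z := hs.trans hsz
  have hγz := hasDerivAt_sqrtCoords_fst (s := s) hz.ne'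
  have hγs : ∀ z', HasDerivAt (fun s' => sqrtCoords (z', s')) _ s :=
    fun z' => hasDerivAt_sqrtCoords_snd hs.ne'
  have hβs : ∀ᶠ z' in 𝓝 z, HasDerivAt (fun s' => F (sqrtCoords (z', s')))
      (fderiv ℝ F (sqrtCoords (z', s)) (1 / (2 * √s), -(1 / (2 * √s)))) s := by
    filter_upwards [hF.eventually_differentiableAt_comp (γ := fun z' => sqrtCoords (z', s))
      hγz.continuousAt] with z' hz'
    exact hz'.hasFDerivAt.comp_hasDerivAt s (hγs z')
  rw [deriv_deriv_sub_rpow_mul hsz hβs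
    ((hF.differentiableAt two_ne_zero).hasFDerivAt.comp_hasDerivAt z hγz)
    (hF.hasDerivAt_fderiv_apply_comp (γ := fun z' => sqrtCoords (z', s)) hγz),
    ContinuousLinearMap.apply_diag_apply_antidiag_of_symm _
      ((hF.isSymmSndFDerivAt (by simp)).eq _ _)]
  field_simp
  ring

theorem contDiffOn_sub_rpow_mul_comp_sqrtCoords {F : ℝ × ℝ → ℝ} (l : ℝ)
    (hF : ContDiffOn ℝ 2 F goursatDomain) :
    ContDiffOn ℝ 2 (fun p : ℝ × ℝ => (p.1 - p.2) ^ l * F (sqrtCoords p)) goursatDomain := by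
  intro p hp
  have hpow : ContDiffAt ℝ 2 (fun p : ℝ × ℝ => (p.1 - p.2) ^ l) p :=
    (contDiffAt_fst.sub contDiffAt_snd).rpow_const_of_ne (sub_ne_zero.2 hp.2.ne')
  have hFγ : ContDiffAt ℝ 2 (fun p => F (sqrtCoords p)) p :=
    (hF.contDiffAt (isOpen_goursatDomain.mem_nhds (sqrtCoords_mem_goursatDomain hp))).comp p
      (contDiffAt_sqrtCoords (hp.1.trans hp.2).ne' hp.1.ne')
  exact (hpow.mul hFγ).contDiffWithinAt

noncomputable def goursatResidual (l : ℝ) (q : ℝ → ℝ) (B : ℝ → ℝ → ℝ) (x y : ℝ) : ℝ :=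
  deriv (deriv fun t => B t y) x - deriv (deriv fun t => B x t) y
    + (l * (l + 1) / y ^ 2 - l * (l + 1) / x ^ 2 - q x) * B x y

noncomputable def canonicalResidual (l : ℝ) (q : ℝ → ℝ) (u : ℝ → ℝ → ℝ) (z s : ℝ) : ℝ :=
  deriv (fun z' => deriv (fun s' => u z' s') s) z
    + l / (z - s) * deriv (fun z' => u z' s) z - l / (z - s) * deriv (fun s' => u z s') s
    - 1 / (4 * √(z * s)) * q (√z + √s) * u z s

theorem canonicalResidual_eq {l : ℝ} {q : ℝ → ℝ} {B : ℝ → ℝ → ℝ}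
    (hB : ContDiffOn ℝ 2 (fun p : ℝ × ℝ => B p.1 p.2) goursatDomain) {z s : ℝ} (hs : 0 < s)
    (hsz : s < z) :
    canonicalResidual l q (fun z s => (z - s) ^ l * B (√z + √s) (√z - √s)) z s
      = (z - s) ^ l / (4 * √z * √s) * goursatResidual l q B (√z + √s) (√z - √s) := by
  have hF : ContDiffAt ℝ 2 (fun p : ℝ × ℝ => B p.1 p.2) (√z + √s, √z - √s) :=
    hB.contDiffAt (isOpen_goursatDomain.mem_nhds
      (sqrtCoords_mem_goursatDomain (p := (z, s)) ⟨hs, hsz⟩))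
  have hu := deriv_deriv_sub_rpow_mul_comp_sqrtCoords (l := l) hs hsz hF
  have hxx : deriv (deriv fun t => B t (√z - √s)) (√z + √s) = _ :=
    hF.deriv_deriv_comp (γ := fun t => (t, √z - √s))
      fun t => (hasDerivAt_id t).prodMk (hasDerivAt_const t _)
  have hyy : deriv (deriv fun t => B (√z + √s) t) (√z - √s) = _ :=
    hF.deriv_deriv_comp (γ := fun t => (√z + √s, t))
      fun t => (hasDerivAt_const t _).prodMk (hasDerivAt_id t)
  simp only [sqrtCoords] at hu
  rw [canonicalResidual, goursatResidual, hu, hxx, hyy]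
  have hz : 0 < z := hs.trans hsz
  have ha : 0 < √z := Real.sqrt_pos.2 hz
  have hb : 0 < √s := Real.sqrt_pos.2 hs
  have hab : √s < √z := Real.sqrt_lt_sqrt hs.le hsz
  have hzs : z - s = (√z + √s) * (√z - √s) := by
    ring_nf; rw [Real.sq_sqrt hz.le, Real.sq_sqrt hs.le]
  have : √z - √s ≠ 0 := by linarith
  rw [Real.sqrt_mul hz.le, hzs]
  field_simp
  ring

theorem canonicalResidual_eq_zero_iff {l : ℝ} {q : ℝ → ℝ} {B : ℝ → ℝ → ℝ}
    (hB : ContDiffOn ℝ 2 (fun p : ℝ × ℝ => B p.1 p.2) goursatDomain) {z s : ℝ} (hs : 0 < s)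
    (hsz : s < z) :
    canonicalResidual l q (fun z s => (z - s) ^ l * B (√z + √s) (√z - √s)) z s = 0
      ↔ goursatResidual l q B (√z + √s) (√z - √s) = 0 := by
  have hfactor : 0 < (z - s) ^ l / (4 * √z * √s) := by
    have := Real.sqrt_pos.2 hs
    have := Real.sqrt_pos.2 (hs.trans hsz)
    exact div_pos (Real.rpow_pos_of_pos (sub_pos.2 hsz) l) (by positivity)
  rw [canonicalResidual_eq hB hs hsz, mul_eq_zero, or_iff_right hfactor.ne']

/-- The change of variables z = (x+y)²/4, s = (x−y)²/4, u(z,s) = (z−s)^l B(x,y)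
transforms the hyperbolic Goursat equation (2.7) for the Gelfand–Levitan kernel into
the canonical form (2.10). -/
theorem goursat_change_of_variables
    (l : ℝ) (q : ℝ → ℝ) (B : ℝ → ℝ → ℝ)
    (hB : ContDiffOn ℝ 2 (fun pr : ℝ × ℝ => B pr.1 pr.2)
      {pr : ℝ × ℝ | 0 < pr.2 ∧ pr.2 < pr.1})
    (u : ℝ → ℝ → ℝ)
    (hu : ∀ z s : ℝ,
      u z s = (z - s) ^ l * B (Real.sqrt z + Real.sqrt s) (Real.sqrt z - Real.sqrt s)) :
    ContDiffOn ℝ 2 (fun pr : ℝ × ℝ => u pr.1 pr.2) {pr : ℝ × ℝ | 0 < pr.2 ∧ pr.2 < pr.1} ∧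
    ((∀ x y : ℝ, 0 < y → y < x →
        deriv (deriv (fun t => B t y)) x - deriv (deriv (fun t => B x t)) y
          + (l * (l + 1) / y ^ 2 - l * (l + 1) / x ^ 2 - q x) * B x y = 0) ↔
      (∀ z s : ℝ, 0 < s → s < z →
        deriv (fun z' => deriv (fun s' => u z' s') s) z
          + (l / (z - s)) * deriv (fun z' => u z' s) z
          - (l / (z - s)) * deriv (fun s' => u z s') s
          = (1 / (4 * Real.sqrt (z * s))) * q (Real.sqrt z + Real.sqrt s) * u z s)) := by
  obtain rfl := funext₂ hu
  refine ⟨contDiffOn_sub_rpow_mul_comp_sqrtCoords l hB, fun h z s hs hsz => ?_,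
    fun h x y hy hyx => ?_⟩
  · have hmem := sqrtCoords_mem_goursatDomain (p := (z, s)) ⟨hs, hsz⟩
    exact sub_eq_zero.1 ((canonicalResidual_eq_zero_iff hB hs hsz).2 (h _ _ hmem.1 hmem.2))
  · obtain ⟨⟨z, s⟩, ⟨hs, hsz⟩, hxy⟩ :=
      sqrtCoords_surjOn (show (x, y) ∈ goursatDomain from ⟨hy, hyx⟩)
    obtain ⟨rfl, rfl⟩ := Prod.ext_iff.1 hxy
    exact (canonicalResidual_eq_zero_iff hB hs hsz).1 (sub_eq_zero.2 (h z s hs hsz))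
end

section
/- Let l ≥ −1/2 and fix 0 < η < ξ. For 0 ≤ s < η and z ≥ ξ set t(z,s) := ((z²−ξ²)(η²−s²))/((z²−η²)(ξ²−s²)) and define v₃(z,s) := (((z²−η²)(ξ²−s²))/((z²−s²)(ξ²−η²)))^{l} · Σ_{k=0}^{∞} ((−l)_k/k!)² t(z,s)^{k}. Then t(z,s) ∈ [0,1) and the series converges on this region; v₃ is twice continuously differentiable on {(z,s) : 0 < s < η, ξ < z} and satisfies there the partial differential equation ∂²v₃/∂z∂s + (4l(l+1)zs/(z²−s²)²) v₃ = 0; moreover v₃(ξ,s) = 1 for all s ∈ [0,η] and v₃(z,η) = 1 for all z ∈ [ξ,∞). -/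
open Set

/-- The Gauss hypergeometric series ₂F₁(−l,−l;1;t), written with Pochhammer symbols. -/
noncomputable def hypSum (l t : ℝ) : ℝ :=
  ∑' k : ℕ, ((ascPochhammer ℝ k).eval (-l) / (Nat.factorial k : ℝ)) ^ 2 * t ^ k

/-- The Riemann function v₃ of (3.7) for the Marchenko transformation operator near ∞. -/
noncomputable def riemannV3 (l z s ξ η : ℝ) : ℝ :=
  (((z ^ 2 - η ^ 2) * (ξ ^ 2 - s ^ 2)) / ((z ^ 2 - s ^ 2) * (ξ ^ 2 - η ^ 2))) ^ l *
    hypSum l (((z ^ 2 - ξ ^ 2) * (η ^ 2 - s ^ 2)) / ((z ^ 2 - η ^ 2) * (ξ ^ 2 - s ^ 2)))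

/-!
Put t = t(z,s). The prefactor of v₃ equals (1 - t)⁻¹, so v₃ = G(t) with
G(u) = (1 - u)^(-l) F(u) and F = ₂F₁(-l,-l;1;·). Since F is the sum of a power series of radius
at least 1 (infinite when l ∈ ℕ), G is analytic on (-1, 1), and F solves the hypergeometric
equation u(1 - u)F'' + (1 - (1 - 2l)u)F' - l²F = 0, which for G reads
u(1 - u)²G'' + (1 - u)²G' = l(l + 1)G.

The argument separates the variables, t = P(z) Q(s) with P(z) = (z² - ξ²)/(z² - η²) and
Q(s) = (s² - η²)/(s² - ξ²), so ∂z∂s G(t) = P'Q' (t G''(t) + G'(t)), and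
P'(z) Q'(s) = -4zs(1 - t)²/(z² - s²)²: the equation for G is exactly the PDE.
On the characteristics z = ξ and s = η we have t = 0, hence v₃ = G(0) = 1.
-/

theorem hasSum_mul_pow_of_succ {R : Type*} [CommRing R] [TopologicalSpace R]
    [IsTopologicalRing R] {f : ℕ → R} (hf : f 0 = 0) {x A : R}
    (h : HasSum (fun n ↦ f (n + 1) * x ^ n) A) : HasSum (fun n ↦ f n * x ^ n) (x * A) := by
  have h' : HasSum (fun n ↦ f (n + 1) * x ^ (n + 1)) (x * A) := by
    simpa only [mul_left_comm x, ← pow_succ'] using h.mul_left x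
  simpa [hf] using (hasSum_nat_add_iff (f := fun n ↦ f n * x ^ n) 1).mp h'

namespace FormalMultilinearSeries

variable {𝕜 : Type*} [NontriviallyNormedField 𝕜]

def derivCoeff (a : ℕ → 𝕜) (n : ℕ) : 𝕜 := (n + 1) * a (n + 1)

theorem derivSeries_ofScalars_coeff_one (a : ℕ → 𝕜) (n : ℕ) :
    (ofScalars 𝕜 a).derivSeries.coeff n 1 = derivCoeff a n := by
  rw [derivSeries_coeff_one, coeff_ofScalars, derivCoeff, nsmul_eq_mul]
  push_cast
  ring

theorem radius_ofScalars_le_radius_derivCoeff (a : ℕ → 𝕜) :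
    (ofScalars 𝕜 a).radius ≤ (ofScalars 𝕜 (derivCoeff a)).radius := by
  refine (radius_le_radius_derivSeries _).trans (radius_le_of_le fun n ↦ ?_)
  rw [norm_apply_eq_norm_coef, coeff_ofScalars, ← derivSeries_ofScalars_coeff_one,
    norm_apply_eq_norm_coef]
  simpa using ((ofScalars 𝕜 a).derivSeries.coeff n).le_opNorm 1

variable [CompleteSpace 𝕜]

theorem hasSum_ofScalarsSum {a : ℕ → 𝕜} {x : 𝕜} (hx : ‖x‖ₑ < (ofScalars 𝕜 a).radius) :
    HasSum (fun n ↦ a n * x ^ n) (ofScalarsSum a x) := by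
  have h := (ofScalars 𝕜 a).hasSum (x := x) (by simpa using hx)
  simp only [ofScalars_apply_eq, smul_eq_mul] at h
  exact h

theorem hasDerivAt_ofScalarsSum {a : ℕ → 𝕜} {x : 𝕜} (hx : ‖x‖ₑ < (ofScalars 𝕜 a).radius) :
    HasDerivAt (ofScalarsSum a) (ofScalarsSum (derivCoeff a) x) x := by
  have hsum : HasSum (fun n ↦ derivCoeff a n * x ^ n) ((ofScalars 𝕜 a).derivSeries.sum x 1) := by
    have := ((ofScalars 𝕜 a).derivSeries.hasSum (x := x) (by
      simpa using hx.trans_le (radius_le_radius_derivSeries _))).mapL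
      (ContinuousLinearMap.apply 𝕜 𝕜 (1 : 𝕜))
    simpa only [ContinuousLinearMap.apply_apply, apply_eq_pow_smul_coeff, _root_.smul_apply,
      derivSeries_ofScalars_coeff_one, smul_eq_mul, mul_comm] using this
  rw [ofScalars_sum_eq]
  simp only [smul_eq_mul, hsum.tsum_eq]
  exact (FormalMultilinearSeries.hasFDerivAt_sum hx).hasDerivAt

theorem deriv_ofScalarsSum {a : ℕ → 𝕜} {x : 𝕜} (hx : ‖x‖ₑ < (ofScalars 𝕜 a).radius) :
    deriv (ofScalarsSum a) x = ofScalarsSum (derivCoeff a) x :=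
  (hasDerivAt_ofScalarsSum hx).deriv

theorem deriv_deriv_ofScalarsSum {a : ℕ → 𝕜} {x : 𝕜} (hx : ‖x‖ₑ < (ofScalars 𝕜 a).radius) :
    deriv (deriv (ofScalarsSum a)) x = ofScalarsSum (derivCoeff (derivCoeff a)) x := by
  have hderiv : deriv (ofScalarsSum (E := 𝕜) a) =ᶠ[nhds x] ofScalarsSum (derivCoeff a) := by
    filter_upwards [Metric.isOpen_eball.mem_nhds (by rwa [Metric.mem_eball, edist_zero_right])]
      with y hy
    exact (hasDerivAt_ofScalarsSum (by simpa using hy)).deriv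
  rw [hderiv.deriv_eq]
  exact (hasDerivAt_ofScalarsSum (hx.trans_le (radius_ofScalars_le_radius_derivCoeff a))).deriv

end FormalMultilinearSeries

open FormalMultilinearSeries Filter Topology
open scoped ContDiff

theorem ordinaryHypergeometricCoefficient_self_one {𝕂 : Type*} [Field 𝕂] (a : 𝕂) (n : ℕ) :
    ordinaryHypergeometricCoefficient a a 1 n = ((ascPochhammer 𝕂 n).eval a / n.factorial) ^ 2 := by
  rw [ordinaryHypergeometricCoefficient, ascPochhammer_eval_one]
  ring

theorem ordinaryHypergeometricCoefficient_succ {𝕂 : Type*} [Field 𝕂] [CharZero 𝕂] (a b c : 𝕂)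
    (n : ℕ) (hc : c + n ≠ 0) :
    (n + 1) * (c + n) * ordinaryHypergeometricCoefficient a b c (n + 1) =
      (a + n) * (b + n) * ordinaryHypergeometricCoefficient a b c n := by
  have hn : (n + 1 : 𝕂) ≠ 0 := by exact_mod_cast n.succ_ne_zero
  simp only [ordinaryHypergeometricCoefficient, ascPochhammer_succ_eval, Nat.factorial_succ,
    Nat.cast_mul, mul_inv]
  push_cast
  field_simp

theorem ordinaryHypergeometric_ode {𝕂 : Type*} [NontriviallyNormedField 𝕂] [CompleteSpace 𝕂]
    [CharZero 𝕂] {a b c x : 𝕂} (hc : ∀ n : ℕ, (n : 𝕂) ≠ -c)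
    (hx : ‖x‖ₑ < (ordinaryHypergeometricSeries 𝕂 a b c).radius) :
    x * (1 - x) * deriv (deriv (₂F₁ a b c)) x + (c - (a + b + 1) * x) * deriv (₂F₁ a b c) x
      - a * b * ₂F₁ a b c x = 0 := by
  set C := ordinaryHypergeometricCoefficient a b c
  have hx1 := hx.trans_le (radius_ofScalars_le_radius_derivCoeff C)
  have hx2 := hx1.trans_le (radius_ofScalars_le_radius_derivCoeff (derivCoeff C))
  have hF : (₂F₁ a b c : 𝕂 → 𝕂) = ofScalarsSum C := rfl
  have H0 : HasSum (fun n ↦ C n * x ^ n) (ofScalarsSum C x) := hasSum_ofScalarsSum hx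
  have H1 := hasSum_ofScalarsSum hx1
  have H2 := hasSum_ofScalarsSum hx2
  have A1 : HasSum (fun n ↦ (n * derivCoeff C n) * x ^ n)
      (x * ofScalarsSum (derivCoeff (derivCoeff C)) x) :=
    hasSum_mul_pow_of_succ (by simp) (by simpa [derivCoeff] using H2)
  have A2 : HasSum (fun n ↦ ((n - 1) * n * C n) * x ^ n)
      (x * (x * ofScalarsSum (derivCoeff (derivCoeff C)) x)) :=
    hasSum_mul_pow_of_succ (by simp) (by simpa [derivCoeff, mul_assoc] using A1)
  have A3 : HasSum (fun n ↦ (n * C n) * x ^ n) (x * ofScalarsSum (derivCoeff C) x) :=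
    hasSum_mul_pow_of_succ (by simp) (by simpa [derivCoeff] using H1)
  have total := ((A1.sub A2).add (H1.mul_left c)).sub ((A3.mul_left (a + b + 1)).add
    (H0.mul_left (a * b)))
  have hzero : ∀ n : ℕ, (n * derivCoeff C n) * x ^ n - ((n - 1) * n * C n) * x ^ n
      + c * (derivCoeff C n * x ^ n) - ((a + b + 1) * ((n * C n) * x ^ n)
      + a * b * (C n * x ^ n)) = 0 := by
    intro n
    have hrec := ordinaryHypergeometricCoefficient_succ a b c n
      fun h ↦ hc n (by linear_combination h)
    simp only [derivCoeff]
    linear_combination x ^ n * hrec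
  simp only [hzero] at total
  rw [hF, deriv_ofScalarsSum hx, deriv_deriv_ofScalarsSum hx]
  linear_combination total.unique hasSum_zero

theorem analyticAt_ordinaryHypergeometric {𝕂 : Type*} [NontriviallyNormedField 𝕂]
    [CompleteSpace 𝕂] {a b c x : 𝕂} (hx : ‖x‖ₑ < (ordinaryHypergeometricSeries 𝕂 a b c).radius) :
    AnalyticAt 𝕂 (₂F₁ a b c) x :=
  ((ordinaryHypergeometricSeries 𝕂 a b c).hasFPowerSeriesOnBall (pos_of_gt hx)).analyticOnNhd x
    (by rwa [Metric.mem_eball, edist_zero_right])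

theorem one_le_radius_ordinaryHypergeometricSeries {𝕂 𝔸 : Type*} [RCLike 𝕂]
    [NormedDivisionRing 𝔸] [NormedAlgebra 𝕂 𝔸] (a b : 𝕂) {c : 𝕂} (hc : ∀ n : ℕ, (n : 𝕂) ≠ -c) :
    1 ≤ (ordinaryHypergeometricSeries 𝔸 a b c).radius := by
  by_cases ha : ∃ k : ℕ, a = -k
  · obtain ⟨k, rfl⟩ := ha
    simp [ordinaryHypergeometric_radius_top_of_neg_nat₁]
  by_cases hb : ∃ k : ℕ, b = -k
  · obtain ⟨k, rfl⟩ := hb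
    simp [ordinaryHypergeometric_radius_top_of_neg_nat₂]
  push Not at ha hb
  rw [ordinaryHypergeometricSeries_radius_eq_one _ _ _ _ fun n ↦
    ⟨fun h ↦ ha n (by rw [h, neg_neg]), fun h ↦ hb n (by rw [h, neg_neg]), hc n⟩]

theorem HasDerivAt.one_sub_rpow_neg_mul {F : ℝ → ℝ} {F' p u : ℝ} (hF : HasDerivAt F F' u)
    (hu : u < 1) :
    HasDerivAt (fun v ↦ (1 - v) ^ (-p) * F v)
      ((1 - u) ^ (-(p + 1)) * (p * F u + (1 - u) * F')) u := by
  have hw : 0 < 1 - u := sub_pos.mpr hu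
  have hpow : HasDerivAt (fun v ↦ (1 - v) ^ (-p)) (-p * (1 - u) ^ (-p - 1) * -1) u :=
    (Real.hasDerivAt_rpow_const (Or.inl hw.ne')).comp u ((hasDerivAt_id' u).const_sub 1)
  have hsplit : (1 - u) ^ (-p) = (1 - u) ^ (-(p + 1)) * (1 - u) := by
    rw [← Real.rpow_add_one hw.ne']
    congr 1
    ring
  refine (hpow.mul hF).congr_deriv ?_
  rw [hsplit, show -p - 1 = -(p + 1) by ring]
  ring

theorem enorm_lt_radius_ordinaryHypergeometricSeries_neg_neg_one (l : ℝ) {u : ℝ}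
    (hu : u ∈ Ioo (-1) 1) : ‖u‖ₑ < (ordinaryHypergeometricSeries ℝ (-l) (-l) (1 : ℝ)).radius := by
  refine lt_of_lt_of_le ?_ (one_le_radius_ordinaryHypergeometricSeries _ _ fun n h ↦ ?_)
  · rw [Real.enorm_eq_ofReal_abs]
    exact ENNReal.ofReal_lt_one.mpr (abs_lt.mpr hu)
  · linarith [n.cast_nonneg (α := ℝ)]

noncomputable def riemannProfile (l u : ℝ) : ℝ := (1 - u) ^ (-l) * ₂F₁ (-l) (-l) (1 : ℝ) u

theorem analyticAt_riemannProfile (l : ℝ) {u : ℝ} (hu : u ∈ Ioo (-1) 1) :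
    AnalyticAt ℝ (riemannProfile l) u := by
  have hpow : ContDiffAt ℝ ω (fun v : ℝ ↦ (1 - v) ^ (-l)) u :=
    (Real.contDiffAt_rpow_const_of_ne (sub_pos.mpr hu.2).ne').comp u
      (contDiffAt_const.sub contDiffAt_id)
  exact hpow.analyticAt.mul (analyticAt_ordinaryHypergeometric
    (enorm_lt_radius_ordinaryHypergeometricSeries_neg_neg_one l hu))

theorem riemannProfile_ode (l : ℝ) {u : ℝ} (hu : u ∈ Ioo (-1) 1) :
    u * (1 - u) ^ 2 * deriv (deriv (riemannProfile l)) u + (1 - u) ^ 2 * deriv (riemannProfile l) u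
      - l * (l + 1) * riemannProfile l u = 0 := by
  set F : ℝ → ℝ := ₂F₁ (-l) (-l) (1 : ℝ)
  have hF : ∀ v ∈ Ioo (-1 : ℝ) 1, AnalyticAt ℝ F v := fun v hv ↦
    analyticAt_ordinaryHypergeometric
      (enorm_lt_radius_ordinaryHypergeometricSeries_neg_neg_one l hv)
  have hG : ∀ v ∈ Ioo (-1 : ℝ) 1, HasDerivAt (riemannProfile l)
      ((1 - v) ^ (-(l + 1)) * (l * F v + (1 - v) * deriv F v)) v := fun v hv ↦
    (hF v hv).differentiableAt.hasDerivAt.one_sub_rpow_neg_mul hv.2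
  have hG' : deriv (riemannProfile l) =ᶠ[𝓝 u]
      fun v ↦ (1 - v) ^ (-(l + 1)) * (l * F v + (1 - v) * deriv F v) := by
    filter_upwards [isOpen_Ioo.mem_nhds hu] with v hv using (hG v hv).deriv
  have hH : HasDerivAt (fun v ↦ l * F v + (1 - v) * deriv F v)
      (l * deriv F u - deriv F u + (1 - u) * deriv (deriv F) u) u := by
    have h1 := (hF u hu).differentiableAt.hasDerivAt.const_mul l
    have h2 := ((hasDerivAt_id' u).const_sub 1).mul (hF u hu).deriv.differentiableAt.hasDerivAt
    exact (h1.add h2).congr_deriv (by ring)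
  rw [hG'.deriv_eq, (hH.one_sub_rpow_neg_mul hu.2).deriv, (hG u hu).deriv]
  have hode := ordinaryHypergeometric_ode (fun n h ↦ by linarith [n.cast_nonneg (α := ℝ)])
    (enorm_lt_radius_ordinaryHypergeometricSeries_neg_neg_one l hu)
  -- after factoring out (1 - u) ^ (-(l + 2)), what is left is (1 - u) ^ 3 times `hode`
  have hw : 0 < 1 - u := sub_pos.mpr hu.2
  have h1 : (1 - u) ^ (-(l + 1)) = (1 - u) ^ (-(l + 1 + 1)) * (1 - u) := by
    rw [← Real.rpow_add_one hw.ne']; congr 1; ring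
  have h0 : (1 - u) ^ (-l) = (1 - u) ^ (-(l + 1)) * (1 - u) := by
    rw [← Real.rpow_add_one hw.ne']; congr 1; ring
  unfold riemannProfile
  rw [h0, h1]
  linear_combination ((1 - u) ^ (-(l + 1 + 1)) * (1 - u) ^ 3) * hode

theorem riemannProfile_zero (l : ℝ) : riemannProfile l 0 = 1 := by
  simp [riemannProfile, ordinaryHypergeometric_zero]

theorem deriv_deriv_comp_mul {v : ℝ → ℝ → ℝ} {f P Q : ℝ → ℝ} {I J : Set ℝ} {z s p q : ℝ}
    (hI : I ∈ 𝓝 z) (hJ : J ∈ 𝓝 s) (hv : ∀ z' ∈ I, ∀ s' ∈ J, v z' s' = f (P z' * Q s'))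
    (hf : ∀ z' ∈ I, DifferentiableAt ℝ f (P z' * Q s))
    (hf' : DifferentiableAt ℝ (deriv f) (P z * Q s)) (hP : HasDerivAt P p z)
    (hQ : HasDerivAt Q q s) :
    deriv (fun z' ↦ deriv (fun s' ↦ v z' s') s) z =
      p * q * (P z * Q s * deriv (deriv f) (P z * Q s) + deriv f (P z * Q s)) := by
  have inner : ∀ z' ∈ I, deriv (fun s' ↦ v z' s') s = deriv f (P z' * Q s) * (P z' * q) := by
    intro z' hz'
    have hev : (fun s' ↦ v z' s') =ᶠ[𝓝 s] fun s' ↦ f (P z' * Q s') := by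
      filter_upwards [hJ] with s' hs' using hv z' hz' s' hs'
    rw [hev.deriv_eq]
    exact ((hf z' hz').hasDerivAt.comp s (hQ.const_mul (P z'))).deriv
  have hev : (fun z' ↦ deriv (fun s' ↦ v z' s') s) =ᶠ[𝓝 z]
      fun z' ↦ deriv f (P z' * Q s) * (P z' * q) := by
    filter_upwards [hI] with z' hz' using inner z' hz'
  have hcomp : HasDerivAt (fun z' ↦ deriv f (P z' * Q s))
      (deriv (deriv f) (P z * Q s) * (p * Q s)) z :=
    hf'.hasDerivAt.comp_of_eq z (hP.mul_const (Q s)) rfl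
  rw [hev.deriv_eq]
  exact (hcomp.mul (hP.mul_const q)).deriv.trans (by ring)

noncomputable def sqRatio (α β x : ℝ) : ℝ := (x ^ 2 - α ^ 2) / (x ^ 2 - β ^ 2)

theorem sqRatio_self (α β : ℝ) : sqRatio α β α = 0 := by simp [sqRatio]

theorem hasDerivAt_sqRatio {α β x : ℝ} (hx : x ^ 2 - β ^ 2 ≠ 0) :
    HasDerivAt (sqRatio α β) (2 * x * (α ^ 2 - β ^ 2) / (x ^ 2 - β ^ 2) ^ 2) x := by
  have hsq : HasDerivAt (fun y : ℝ ↦ y ^ 2) (2 * x) x := by simpa using hasDerivAt_pow 2 x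
  refine ((hsq.sub_const (α ^ 2)).div (hsq.sub_const (β ^ 2)) hx).congr_deriv ?_
  field_simp
  ring

theorem contDiffAt_sqRatio {α β x : ℝ} {n : WithTop ℕ∞} (hx : x ^ 2 - β ^ 2 ≠ 0) :
    ContDiffAt ℝ n (sqRatio α β) x :=
  ContDiffAt.div (by fun_prop) (by fun_prop) hx

theorem sqRatio_mul_sqRatio (ξ η z s : ℝ) :
    sqRatio ξ η z * sqRatio η ξ s =
      ((z ^ 2 - ξ ^ 2) * (η ^ 2 - s ^ 2)) / ((z ^ 2 - η ^ 2) * (ξ ^ 2 - s ^ 2)) := by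
  rw [sqRatio, sqRatio, div_mul_div_comm, ← neg_sub (s ^ 2), ← neg_sub (s ^ 2) (ξ ^ 2),
    mul_neg, mul_neg, neg_div_neg_eq]

theorem one_sub_sqRatio_mul_sqRatio {ξ η z s : ℝ} (hz : z ^ 2 - η ^ 2 ≠ 0)
    (hs : ξ ^ 2 - s ^ 2 ≠ 0) :
    1 - sqRatio ξ η z * sqRatio η ξ s =
      ((z ^ 2 - s ^ 2) * (ξ ^ 2 - η ^ 2)) / ((z ^ 2 - η ^ 2) * (ξ ^ 2 - s ^ 2)) := by
  rw [sqRatio_mul_sqRatio]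
  field_simp
  ring

theorem hypSum_eq_ordinaryHypergeometric (l : ℝ) : hypSum l = ₂F₁ (-l) (-l) (1 : ℝ) := by
  funext t
  rw [ordinaryHypergeometric, ordinaryHypergeometricSeries, ← ofScalarsSum, ofScalars_sum_eq]
  simp only [ordinaryHypergeometricCoefficient_self_one, smul_eq_mul]
  rfl

theorem hasSum_hypSum (l : ℝ) {t : ℝ} (ht : t ∈ Ioo (-1) 1) :
    HasSum (fun k : ℕ ↦ ((ascPochhammer ℝ k).eval (-l) / (Nat.factorial k : ℝ)) ^ 2 * t ^ k)
      (hypSum l t) := by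
  rw [hypSum_eq_ordinaryHypergeometric]
  have h := hasSum_ofScalarsSum (enorm_lt_radius_ordinaryHypergeometricSeries_neg_neg_one l ht)
  simp only [ordinaryHypergeometricCoefficient_self_one] at h
  exact h

section Region

variable {ξ η z s : ℝ}

theorem sqRatio_mul_sqRatio_mem_Ico (hη : 0 < η) (hξ : η < ξ) (hs0 : 0 ≤ s) (hsη : s ≤ η)
    (hz : ξ ≤ z) : sqRatio ξ η z * sqRatio η ξ s ∈ Ico 0 1 := by
  have hzη : 0 < z ^ 2 - η ^ 2 := by nlinarith
  have hξs : 0 < ξ ^ 2 - s ^ 2 := by nlinarith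
  have hzs : 0 < z ^ 2 - s ^ 2 := by nlinarith
  have hξη : 0 < ξ ^ 2 - η ^ 2 := by nlinarith
  have h1 : 0 < 1 - sqRatio ξ η z * sqRatio η ξ s := by
    rw [one_sub_sqRatio_mul_sqRatio hzη.ne' hξs.ne']
    positivity
  refine ⟨?_, sub_pos.mp h1⟩
  rw [sqRatio_mul_sqRatio]
  exact div_nonneg (mul_nonneg (by nlinarith) (by nlinarith)) (by positivity)

theorem sqRatio_mul_sqRatio_mem_Ioo (hη : 0 < η) (hξ : η < ξ) (hs0 : 0 < s) (hsη : s < η)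
    (hz : ξ < z) : sqRatio ξ η z * sqRatio η ξ s ∈ Ioo (-1) 1 := by
  have hpos : 0 < sqRatio ξ η z * sqRatio η ξ s := by
    have hzξ : 0 < z ^ 2 - ξ ^ 2 := by nlinarith
    have hηs : 0 < η ^ 2 - s ^ 2 := by nlinarith
    have hzη : 0 < z ^ 2 - η ^ 2 := by nlinarith
    have hξs : 0 < ξ ^ 2 - s ^ 2 := by nlinarith
    rw [sqRatio_mul_sqRatio]
    positivity
  exact ⟨by linarith, (sqRatio_mul_sqRatio_mem_Ico hη hξ hs0.le hsη.le hz.le).2⟩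

theorem riemannV3_eq_riemannProfile (l : ℝ) (hη : 0 < η) (hξ : η < ξ) (hs0 : 0 ≤ s)
    (hsη : s ≤ η) (hz : ξ ≤ z) :
    riemannV3 l z s ξ η = riemannProfile l (sqRatio ξ η z * sqRatio η ξ s) := by
  have hzη : z ^ 2 - η ^ 2 ≠ 0 := (by nlinarith : (0 : ℝ) < _).ne'
  have hξs : ξ ^ 2 - s ^ 2 ≠ 0 := (by nlinarith : (0 : ℝ) < _).ne'
  have hpos : 0 ≤ 1 - sqRatio ξ η z * sqRatio η ξ s :=
    sub_nonneg.mpr (sqRatio_mul_sqRatio_mem_Ico hη hξ hs0 hsη hz).2.le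
  rw [riemannV3, hypSum_eq_ordinaryHypergeometric, ← sqRatio_mul_sqRatio, ← inv_div,
    ← one_sub_sqRatio_mul_sqRatio hzη hξs, Real.inv_rpow hpos, ← Real.rpow_neg hpos]
  rfl

theorem contDiffOn_riemannV3 (l : ℝ) (hη : 0 < η) (hξ : η < ξ) :
    ContDiffOn ℝ 2 (fun pr : ℝ × ℝ ↦ riemannV3 l pr.1 pr.2 ξ η)
      {pr : ℝ × ℝ | 0 < pr.2 ∧ pr.2 < η ∧ ξ < pr.1} := by
  refine ContDiffOn.congr (f := fun pr : ℝ × ℝ ↦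
      riemannProfile l (sqRatio ξ η pr.1 * sqRatio η ξ pr.2)) (fun pr ⟨hs0, hsη, hz⟩ ↦ ?_)
    (fun pr ⟨hs0, hsη, hz⟩ ↦ riemannV3_eq_riemannProfile l hη hξ hs0.le hsη.le hz.le)
  have hzη : pr.1 ^ 2 - η ^ 2 ≠ 0 := (by nlinarith : (0 : ℝ) < _).ne'
  have hsξ : pr.2 ^ 2 - ξ ^ 2 ≠ 0 := (by nlinarith : _ < (0 : ℝ)).ne
  have harg : ContDiffAt ℝ 2 (fun pr : ℝ × ℝ ↦ sqRatio ξ η pr.1 * sqRatio η ξ pr.2) pr :=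
    ((contDiffAt_sqRatio hzη).comp pr contDiffAt_fst).mul
      ((contDiffAt_sqRatio hsξ).comp pr contDiffAt_snd)
  have ht := sqRatio_mul_sqRatio_mem_Ioo hη hξ hs0 hsη hz
  exact ((analyticAt_riemannProfile l ht).contDiffAt.comp pr harg).contDiffWithinAt

theorem riemannV3_pde (l : ℝ) (hη : 0 < η) (hξ : η < ξ) (hs0 : 0 < s) (hsη : s < η)
    (hz : ξ < z) :
    deriv (fun z' ↦ deriv (fun s' ↦ riemannV3 l z' s' ξ η) s) z
      + (4 * l * (l + 1) * z * s / (z ^ 2 - s ^ 2) ^ 2) * riemannV3 l z s ξ η = 0 := by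
  have hzη : z ^ 2 - η ^ 2 ≠ 0 := (by nlinarith : (0 : ℝ) < _).ne'
  have hξs : ξ ^ 2 - s ^ 2 ≠ 0 := (by nlinarith : (0 : ℝ) < _).ne'
  have hsξ : s ^ 2 - ξ ^ 2 ≠ 0 := (by nlinarith : _ < (0 : ℝ)).ne
  have hzs : z ^ 2 - s ^ 2 ≠ 0 := (by nlinarith : (0 : ℝ) < _).ne'
  have ht := sqRatio_mul_sqRatio_mem_Ioo hη hξ hs0 hsη hz
  have hmixed := deriv_deriv_comp_mul (v := fun z' s' ↦ riemannV3 l z' s' ξ η)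
    (f := riemannProfile l) (P := sqRatio ξ η) (Q := sqRatio η ξ)
    (Ioi_mem_nhds hz) (Ioo_mem_nhds hs0 hsη)
    (fun z' hz' s' hs' ↦ riemannV3_eq_riemannProfile l hη hξ hs'.1.le hs'.2.le (le_of_lt hz'))
    (fun z' hz' ↦ (analyticAt_riemannProfile l
      (sqRatio_mul_sqRatio_mem_Ioo hη hξ hs0 hsη hz')).differentiableAt)
    (analyticAt_riemannProfile l ht).deriv.differentiableAt
    (hasDerivAt_sqRatio hzη) (hasDerivAt_sqRatio hsξ)
  have hprod : 2 * z * (ξ ^ 2 - η ^ 2) / (z ^ 2 - η ^ 2) ^ 2 *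
      (2 * s * (η ^ 2 - ξ ^ 2) / (s ^ 2 - ξ ^ 2) ^ 2) =
      -4 * z * s / (z ^ 2 - s ^ 2) ^ 2 * (1 - sqRatio ξ η z * sqRatio η ξ s) ^ 2 := by
    rw [one_sub_sqRatio_mul_sqRatio hzη hξs]
    field_simp
    ring
  rw [hmixed, riemannV3_eq_riemannProfile l hη hξ hs0.le hsη.le hz.le]
  set t := sqRatio ξ η z * sqRatio η ξ s
  linear_combination (t * deriv (deriv (riemannProfile l)) t + deriv (riemannProfile l) t) * hprod
    + (-4 * z * s / (z ^ 2 - s ^ 2) ^ 2) * riemannProfile_ode l ht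

end Region

theorem riemannV3_solves_goursat_general (l η ξ : ℝ)
    (hη : 0 < η) (hξ : η < ξ) :
    (∀ z s : ℝ, 0 ≤ s → s < η → ξ ≤ z →
      ((z ^ 2 - ξ ^ 2) * (η ^ 2 - s ^ 2)) / ((z ^ 2 - η ^ 2) * (ξ ^ 2 - s ^ 2))
        ∈ Ico (0 : ℝ) 1 ∧
      Summable (fun k : ℕ =>
        ((ascPochhammer ℝ k).eval (-l) / (Nat.factorial k : ℝ)) ^ 2 *
          (((z ^ 2 - ξ ^ 2) * (η ^ 2 - s ^ 2)) /
            ((z ^ 2 - η ^ 2) * (ξ ^ 2 - s ^ 2))) ^ k)) ∧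
    ContDiffOn ℝ 2 (fun pr : ℝ × ℝ => riemannV3 l pr.1 pr.2 ξ η)
      {pr : ℝ × ℝ | 0 < pr.2 ∧ pr.2 < η ∧ ξ < pr.1} ∧
    (∀ z s : ℝ, 0 < s → s < η → ξ < z →
      deriv (fun z' => deriv (fun s' => riemannV3 l z' s' ξ η) s) z
        + (4 * l * (l + 1) * z * s / (z ^ 2 - s ^ 2) ^ 2) * riemannV3 l z s ξ η = 0) ∧
    (∀ s ∈ Icc (0 : ℝ) η, riemannV3 l ξ s ξ η = 1) ∧
    (∀ z ∈ Ici ξ, riemannV3 l z η ξ η = 1) := by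
  refine ⟨fun z s hs0 hsη hz ↦ ?_, contDiffOn_riemannV3 l hη hξ,
    fun z s hs0 hsη hz ↦ riemannV3_pde l hη hξ hs0 hsη hz, fun s ⟨hs0, hsη⟩ ↦ ?_, fun z hz ↦ ?_⟩
  · rw [← sqRatio_mul_sqRatio]
    have ht := sqRatio_mul_sqRatio_mem_Ico hη hξ hs0 hsη.le hz
    exact ⟨ht, (hasSum_hypSum l ⟨by linarith [ht.1], ht.2⟩).summable⟩
  · rw [riemannV3_eq_riemannProfile l hη hξ hs0 hsη le_rfl, sqRatio_self, zero_mul,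
      riemannProfile_zero]
  · rw [riemannV3_eq_riemannProfile l hη hξ hη.le le_rfl hz, sqRatio_self, mul_zero,
      riemannProfile_zero]

/-- The function v₃ given by (3.7) is the Riemann function of the characteristic Goursat
problem (3.6): it is C², solves ∂²v₃/∂z∂s + 4l(l+1)zs/(z²−s²)² v₃ = 0, and equals 1 on
the characteristics z = ξ and s = η. -/
theorem riemannV3_solves_goursat (l η ξ : ℝ) (hl : -(1/2) ≤ l)
    (hη : 0 < η) (hξ : η < ξ) :
    (∀ z s : ℝ, 0 ≤ s → s < η → ξ ≤ z →
      ((z ^ 2 - ξ ^ 2) * (η ^ 2 - s ^ 2)) / ((z ^ 2 - η ^ 2) * (ξ ^ 2 - s ^ 2))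
        ∈ Ico (0 : ℝ) 1 ∧
      Summable (fun k : ℕ =>
        ((ascPochhammer ℝ k).eval (-l) / (Nat.factorial k : ℝ)) ^ 2 *
          (((z ^ 2 - ξ ^ 2) * (η ^ 2 - s ^ 2)) /
            ((z ^ 2 - η ^ 2) * (ξ ^ 2 - s ^ 2))) ^ k)) ∧
    ContDiffOn ℝ 2 (fun pr : ℝ × ℝ => riemannV3 l pr.1 pr.2 ξ η)
      {pr : ℝ × ℝ | 0 < pr.2 ∧ pr.2 < η ∧ ξ < pr.1} ∧
    (∀ z s : ℝ, 0 < s → s < η → ξ < z →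
      deriv (fun z' => deriv (fun s' => riemannV3 l z' s' ξ η) s) z
        + (4 * l * (l + 1) * z * s / (z ^ 2 - s ^ 2) ^ 2) * riemannV3 l z s ξ η = 0) ∧
    (∀ s ∈ Icc (0 : ℝ) η, riemannV3 l ξ s ξ η = 1) ∧
    (∀ z ∈ Ici ξ, riemannV3 l z η ξ η = 1) :=
  riemannV3_solves_goursat_general l η ξ hη hξ
end
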